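/- Let (s_t)_{t≥0} be a semigroup of isometries on a Hilbert C*-module E and set E_u := ⋂_{t≥0} s_t E. Then ⋂_{t≥0} s_t(E_u^⊥) = {0}; that is, E_u^⊥ reduces s to a completely nonunitary semigroup. -/

import Mathlib

open scoped RightActions
open MeasureTheory Filter Topology

noncomputable section

/-- The December 2024 Mathlib `CStarModule` (right `Aᵐᵒᵖ`-action), whose meaning Mathlib has
since changed to a left `A`-action; restated here with its old meaning. -/
class CStarModuleOld (A : outParam <| Type*) (E : Type*) [NonUnitalSemiring A] [StarRing A]
    [Module ℂ A] [AddCommGroup E] [Module ℂ E] [PartialOrder A] [SMul Aᵐᵒᵖ E] [Norm A] [Norm E]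
    extends Inner A E where
  inner_add_right {x} {y} {z} : inner x (y + z) = inner x y + inner x z
  inner_self_nonneg {x} : 0 ≤ inner x x
  inner_self {x} : inner x x = 0 ↔ x = 0
  inner_op_smul_right {a : A} {x y : E} : inner x (y <• a) = inner x y * a
  inner_smul_right_complex {z : ℂ} {x} {y} : inner x (z • y) = z • inner x y
  star_inner x y : star (inner x y) = inner y x
  norm_eq_sqrt_norm_inner_self x : ‖x‖ = √‖inner x x‖

variable {A E : Type*} [CStarAlgebra A] [PartialOrder A] [StarOrderedRing A]
  [NormedAddCommGroup E] [NormedSpace ℂ E] [SMul Aᵐᵒᵖ E] [CStarModuleOld A E]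

local notation "⟪" x ", " y "⟫" => (inner A x y : A)

variable (A) in
/-- Orthogonal complement of a subset of a Hilbert C*-module. -/
def ortho (F : Set E) : Set E := {x : E | ∀ y ∈ F, ⟪y, x⟫ = 0}

namespace CStarModuleOld

omit [StarOrderedRing A] in
theorem inner_zero_right (x : E) : ⟪x, (0 : E)⟫ = 0 := by
  have h : ⟪x, (0 : E) + 0⟫ = ⟪x, 0⟫ + ⟪x, 0⟫ := inner_add_right
  rwa [add_zero, left_eq_add] at h

omit [StarOrderedRing A] in
theorem zero_mem_ortho (F : Set E) : (0 : E) ∈ ortho A F :=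
  fun y _ => inner_zero_right y

omit [StarOrderedRing A] in
theorem eq_zero_of_mem_ortho_self {F : Set E} {x : E} (hxF : x ∈ F) (hx : x ∈ ortho A F) :
    x = 0 :=
  inner_self.mp (hx x hxF)

end CStarModuleOld

open CStarModuleOld in
theorem orthocomplement_of_unitary_part_completely_nonunitary_general
    (s : ℝ → E →ₗ[ℂ] E)
    (hs0 : s 0 = LinearMap.id) :
    (⋂ t ∈ Set.Ici (0 : ℝ),
        s t '' ortho A (⋂ r ∈ Set.Ici (0 : ℝ), Set.range (s r))) = {0} := by
  set U := ⋂ r ∈ Set.Ici (0 : ℝ), Set.range (s r)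
  refine Set.eq_singleton_iff_unique_mem.mpr ⟨?_, fun x hx => ?_⟩
  · exact Set.mem_iInter₂.mpr fun t _ => ⟨0, zero_mem_ortho U, map_zero (s t)⟩
  rw [Set.mem_iInter₂] at hx
  have hxU : x ∈ U := Set.mem_iInter₂.mpr fun r hr => Set.image_subset_range _ _ (hx r hr)
  have hxU_perp : x ∈ ortho A U := by simpa [hs0] using hx 0 (Set.mem_Ici.2 le_rfl)
  exact eq_zero_of_mem_ortho_self hxU hxU_perp

theorem orthocomplement_of_unitary_part_completely_nonunitary
    [CompleteSpace E]
    (s : ℝ → E →ₗ[ℂ] E)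
    (hs0 : s 0 = LinearMap.id)
    (hsg : ∀ r t : ℝ, 0 ≤ r → 0 ≤ t → s (r + t) = (s r).comp (s t))
    (hiso : ∀ t : ℝ, 0 ≤ t → ∀ x y : E, ⟪s t x, s t y⟫ = ⟪x, y⟫) :
    (⋂ t ∈ Set.Ici (0 : ℝ),
        s t '' ortho A (⋂ r ∈ Set.Ici (0 : ℝ), Set.range (s r))) = {0} :=
  orthocomplement_of_unitary_part_completely_nonunitary_general s hs0
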